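/- For a free monoid on a finite alphabet A with a distinguished subset B of separator letters, the syllable order with separators B — the lexicographic combination of first comparing the projections onto words over B (in shortlex order) and then comparing the projections onto words over A∖B (in shortlex order) — is a noetherian and multiplicative quasiorder on words over A. -/

import Mathlib

/-!
The syllable order is pulled back, as `x ≤ y ↔ κ x ≤ κ y`, along the key
`κ w = (w|_B, w|_{A∖B})` from the lexicographic square of the shortlex order. Over a finite
alphabet shortlex is a well-founded strict order compatible with concatenation on both sides,
hence so is its lexicographic square for componentwise concatenation. Since `κ` turns
concatenation into componentwise concatenation, these properties transfer to words.
-/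

namespace List

variable {α : Type*} {r : α → α → Prop}

instance [IsTrans α r] : IsTrans (List α) (Lex r) :=
  ⟨fun _ _ _ => lex_trans (IsTrans.trans _ _ _)⟩

instance [IsTrans α r] : IsTrans (List α) (Shortlex r) :=
  inferInstanceAs (IsTrans _ (InvImage _ _))

theorem Lex.append_same_right_of_length_eq {s₁ s₂ : List α} (h : Lex r s₁ s₂)
    (hlen : s₁.length = s₂.length) (t : List α) : Lex r (s₁ ++ t) (s₂ ++ t) := by
  induction h with
  | nil => simp at hlen
  | cons _ ih => exact Lex.cons (ih (by simpa using hlen))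
  | rel h => exact Lex.rel h

theorem Shortlex.append_same_right {s₁ s₂ : List α} (h : Shortlex r s₁ s₂) (t : List α) :
    Shortlex r (s₁ ++ t) (s₂ ++ t) := by
  rcases shortlex_def.mp h with hlt | ⟨hlen, hlex⟩
  · exact of_length_lt (by simpa using hlt)
  · exact of_lex (by simpa using hlen) (hlex.append_same_right_of_length_eq hlen t)

end List

def KeyLE {α γ : Type*} (T : γ → γ → Prop) (key : α → γ) (x y : α) : Prop :=
  T (key x) (key y) ∨ key x = key y

namespace KeyLE

variable {α γ : Type*} {T : γ → γ → Prop} {key : α → γ}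

theorem reflexive : Reflexive (KeyLE T key) := fun _ => Or.inr rfl

theorem transitive [IsTrans γ T] : Transitive (KeyLE T key) := by
  rintro x y z (hxy | hxy) (hyz | hyz)
  · exact Or.inl (_root_.trans hxy hyz)
  · exact Or.inl (hyz ▸ hxy)
  · exact Or.inl (hxy ▸ hyz)
  · exact Or.inr (hxy.trans hyz)

variable [Std.Irrefl T] [IsTrans γ T]

theorem strict_iff {x y : α} :
    (KeyLE T key x y ∧ ¬ KeyLE T key y x) ↔ T (key x) (key y) := by
  refine ⟨fun ⟨hxy, hyx⟩ => hxy.resolve_right fun h => hyx (.inr h.symm),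
    fun h => ⟨.inl h, ?_⟩⟩
  rintro (h' | h')
  · exact irrefl _ (_root_.trans h h')
  · exact irrefl _ (h' ▸ h)

theorem antisymm_iff {x y : α} :
    (KeyLE T key x y ∧ KeyLE T key y x) ↔ key x = key y := by
  refine ⟨fun ⟨hxy, hyx⟩ => ?_, fun h => ⟨.inr h, .inr h.symm⟩⟩
  rcases hxy with hxy | hxy
  · rcases hyx with hyx | hyx
    · exact (irrefl _ (_root_.trans hxy hyx)).elim
    · exact (irrefl _ (hyx ▸ hxy)).elim
  · exact hxy

theorem wellFounded_strict (hT : WellFounded T) :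
    WellFounded fun x y => KeyLE T key x y ∧ ¬ KeyLE T key y x :=
  Subrelation.wf strict_iff.mp (InvImage.wf key hT)

end KeyLE

namespace Prod.Lex

variable {α : Type*} {r : α → α → Prop}

theorem shortlex_append_left {x y : List α × List α}
    (h : Prod.Lex (List.Shortlex r) (List.Shortlex r) x y) (p : List α × List α) :
    Prod.Lex (List.Shortlex r) (List.Shortlex r)
      (p.1 ++ x.1, p.2 ++ x.2) (p.1 ++ y.1, p.2 ++ y.2) := by
  obtain ⟨x₁, x₂⟩ := x
  obtain ⟨y₁, y₂⟩ := y
  rcases h with ⟨_, _, h⟩ | ⟨_, h⟩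
  · exact .left _ _ (h.append_left _)
  · exact .right _ (h.append_left _)

theorem shortlex_append_right {x y : List α × List α}
    (h : Prod.Lex (List.Shortlex r) (List.Shortlex r) x y) (s : List α × List α) :
    Prod.Lex (List.Shortlex r) (List.Shortlex r)
      (x.1 ++ s.1, x.2 ++ s.2) (y.1 ++ s.1, y.2 ++ s.2) := by
  obtain ⟨x₁, x₂⟩ := x
  obtain ⟨y₁, y₂⟩ := y
  rcases h with ⟨_, _, h⟩ | ⟨_, h⟩
  · exact .left _ _ (h.append_same_right _)
  · exact .right _ (h.append_same_right _)

end Prod.Lex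

def syllableKey {A : Type*} (B : Set A) [DecidablePred (· ∈ B)] (w : List A) :
    List A × List A :=
  (w.filter (· ∈ B), w.filter (· ∉ B))

theorem syllableKey_append {A : Type*} (B : Set A) [DecidablePred (· ∈ B)] (u v : List A) :
    syllableKey B (u ++ v) = ((syllableKey B u).1 ++ (syllableKey B v).1,
      (syllableKey B u).2 ++ (syllableKey B v).2) := by
  simp [syllableKey, List.filter_append]

/-- The syllable order with separator letters `B` on words over a finite totally
ordered alphabet is a noetherian and multiplicative quasiorder. -/
theorem syllable_order_noetherian_multiplicative {A : Type*} [Fintype A] [LinearOrder A]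
    (B : Set A) [DecidablePred (· ∈ B)] :
    let sl : List A → List A → Prop := fun x y =>
      x.length < y.length ∨ (x.length = y.length ∧ List.Lex (· < ·) x y)
    let fB : List A → List A := fun w => w.filter (fun a => decide (a ∈ B))
    let fA : List A → List A := fun w => w.filter (fun a => decide (a ∉ B))
    let r : List A → List A → Prop := fun x y =>
      sl (fB x) (fB y) ∨ (fB x = fB y ∧ (sl (fA x) (fA y) ∨ fA x = fA y))
    Reflexive r ∧ Transitive r ∧
    WellFounded (fun x y => r x y ∧ ¬ r y x) ∧
    (∀ p s x y : List A,
      ((r x y ∧ ¬ r y x) →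
        (r (p ++ x) (p ++ y) ∧ ¬ r (p ++ y) (p ++ x)) ∧
        (r (x ++ s) (y ++ s) ∧ ¬ r (y ++ s) (x ++ s))) ∧
      ((r x y ∧ r y x) →
        (r (p ++ x) (p ++ y) ∧ r (p ++ y) (p ++ x)) ∧
        (r (x ++ s) (y ++ s) ∧ r (y ++ s) (x ++ s)))) := by
  intro sl fB fA r
  have hr : r =
      KeyLE (Prod.Lex (List.Shortlex (· < ·)) (List.Shortlex (· < ·))) (syllableKey B) := by
    ext x y
    simp only [r, sl, fB, fA, KeyLE, syllableKey, Prod.lex_def, List.shortlex_def, Prod.ext_iff]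
    tauto
  clear_value r
  subst hr
  refine ⟨KeyLE.reflexive, KeyLE.transitive,
    KeyLE.wellFounded_strict (.prod_lex (List.Shortlex.wf wellFounded_lt)
      (List.Shortlex.wf wellFounded_lt)), fun p s x y => ?_⟩
  simp only [KeyLE.strict_iff, KeyLE.antisymm_iff, syllableKey_append]
  exact ⟨fun h => ⟨h.shortlex_append_left _, h.shortlex_append_right _⟩,
    fun h => by simp [h]⟩
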